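/- Let W ∈ L³(ℝ³), α₀ ∈ L¹∩L^∞(ℝ³) nonnegative, and ξ̃ ∈ L²(ℝ³×ℝ³). Define G(X) = h⁻¹ ∫ α₀(r/h) (W(X+r/2) + W(X−r/2)) ξ̃(X,r) dr. Then ‖G‖_{L^{6/5}(ℝ³)} ≤ C h^{1/2} ‖W‖₃ ‖ξ̃‖₂ for a constant C depending only on ‖α₀‖₁ and ‖α₀‖_∞. -/

import Mathlib

/-!
Write `ν = α₀(r/h) dr`, a measure of total mass `S = h³ ‖α₀‖₁`, and
`F(X, r) = (W(X + r/2) + W(X - r/2)) ξ̃(X, r)`. Pointwise `|G(X)| ≤ h⁻¹ ‖F(X, ·)‖_{L¹(ν)}`, and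
Hölder for the finite measure `ν` gives `‖F(X, ·)‖_{L¹(ν)} ≤ S^{1/6} ‖F(X, ·)‖_{L^{6/5}(ν)}`, so
`‖G‖_{6/5} ≤ h⁻¹ S^{1/6} ‖F‖_{L^{6/5}(dX ⊗ ν)}`. Hölder on `dX ⊗ ν` with exponents `3` and `2`
splits off `‖W(X ± r/2)‖_{L³(dX ⊗ ν)} = S^{1/3} ‖W‖₃` (translation invariance in `X`) and
`‖ξ̃‖_{L²(dX ⊗ ν)} ≤ ‖α₀‖_∞^{1/2} ‖ξ̃‖₂`. Altogether
`‖G‖_{6/5} ≤ 2 h⁻¹ (‖α₀‖_∞ S)^{1/2} ‖W‖₃ ‖ξ̃‖₂ = 2 (‖α₀‖_∞ ‖α₀‖₁)^{1/2} h^{1/2} ‖W‖₃ ‖ξ̃‖₂`.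
-/

open MeasureTheory Complex

noncomputable section

abbrev E3 : Type := EuclideanSpace ℝ (Fin 3)

def LpNorm (p : ℝ) (G : E3 → ℂ) : ℝ := (∫ X : E3, ‖G X‖ ^ p) ^ p⁻¹

open scoped ENNReal

theorem LpNorm_nonneg (p : ℝ) (G : E3 → ℂ) : 0 ≤ LpNorm p G :=
  Real.rpow_nonneg (integral_nonneg fun _ => by positivity) _

section LpNorms

variable {α F : Type*} [MeasurableSpace α] {μ : Measure α} [NormedAddCommGroup F]

-- No measurability is needed: if `‖f‖ ^ p` is not integrable, the left side is the junk value `0`.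
theorem integral_norm_rpow_le_toReal_eLpNorm' (f : α → F) {p : ℝ} (hp : 0 < p) :
    (∫ a, ‖f a‖ ^ p ∂μ) ^ p⁻¹ ≤ (eLpNorm' f p μ).toReal := by
  by_cases hf : Integrable (fun a => ‖f a‖ ^ p) μ
  · rw [eLpNorm', ← ENNReal.toReal_rpow, one_div,
      integral_eq_lintegral_of_nonneg_ae (.of_forall fun _ => by positivity) hf.1]
    simp_rw [← ENNReal.ofReal_rpow_of_nonneg (norm_nonneg _) hp.le, ofReal_norm]
    rfl
  · rw [integral_undef hf, Real.zero_rpow (inv_ne_zero hp.ne')]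
    exact ENNReal.toReal_nonneg

end LpNorms

section Shear

variable {G β : Type*} [MeasurableSpace G] [AddGroup G] [MeasurableAdd₂ G] [MeasurableSpace β]
  (μ : Measure G) [SFinite μ] [μ.IsAddRightInvariant] (ν : Measure β) [SFinite ν] {f : β → G}

theorem quasiMeasurePreserving_fst_add (hf : Measurable f) :
    Measure.QuasiMeasurePreserving (fun p : G × β => p.1 + f p.2) (μ.prod ν) μ := by
  have hm : Measurable fun p : G × β => p.1 + f p.2 := measurable_fst.add (hf.comp measurable_snd)
  refine ⟨hm, .mk fun s hs hμs => ?_⟩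
  have hsection (y : β) : μ ((fun x => (x, y)) ⁻¹' ((fun p : G × β => p.1 + f p.2) ⁻¹' s)) = 0 :=
    (measure_preimage_add_right μ (f y) s).trans hμs
  rw [Measure.map_apply hm hs, Measure.prod_apply_symm (hm hs)]
  simp [hsection]

theorem lintegral_comp_fst_add (hf : Measurable f) {g : G → ℝ≥0∞} (hg : AEMeasurable g μ) :
    ∫⁻ p, g (p.1 + f p.2) ∂(μ.prod ν) = ν Set.univ * ∫⁻ x, g x ∂μ := by
  rw [lintegral_prod_symm (fun p => g (p.1 + f p.2)) (hg.comp_quasiMeasurePreserving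
    (quasiMeasurePreserving_fst_add μ ν hf))]
  simp [lintegral_add_right_eq_self, mul_comm]

theorem eLpNorm'_comp_fst_add (hf : Measurable f) {ε : Type*} [TopologicalSpace ε]
    [ContinuousENorm ε] {g : G → ε} (hg : AEStronglyMeasurable g μ) {q : ℝ} (hq : 0 < q) :
    eLpNorm' (fun p => g (p.1 + f p.2)) q (μ.prod ν) = ν Set.univ ^ (1 / q) * eLpNorm' g q μ := by
  rw [eLpNorm', eLpNorm', lintegral_comp_fst_add μ ν hf (hg.enorm.pow_const q),
    ENNReal.mul_rpow_of_nonneg _ _ (by positivity)]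

end Shear

theorem lintegral_comp_inv_smul_of_pos {E : Type*} [NormedAddCommGroup E] [NormedSpace ℝ E]
    [MeasurableSpace E] [BorelSpace E] [FiniteDimensional ℝ E] (μ : Measure E)
    [μ.IsAddHaarMeasure] (g : E → ℝ≥0∞) {h : ℝ} (hh : 0 < h) :
    ∫⁻ x, g (h⁻¹ • x) ∂μ = ENNReal.ofReal (h ^ Module.finrank ℝ E) * ∫⁻ x, g x ∂μ := by
  have hinv : h⁻¹ ≠ 0 := inv_ne_zero hh.ne'
  have := lintegral_map_equiv (μ := μ) g (MeasurableEquiv.smul₀ h⁻¹ hinv)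
  rw [MeasurableEquiv.coe_smul₀, Measure.map_addHaar_smul μ hinv, lintegral_smul_measure,
    inv_pow, inv_inv, abs_of_pos (by positivity)] at this
  exact this.symm

theorem eLpNorm'_prod_withDensity_le {α β ε : Type*} [MeasurableSpace α] [MeasurableSpace β]
    [TopologicalSpace ε] [ContinuousENorm ε] (μ : Measure α) (ν : Measure β) [SFinite ν]
    {A : β → ℝ≥0∞} {M : ℝ≥0∞} (hAM : ∀ y, A y ≤ M) (f : α × β → ε) {q : ℝ} (hq : 0 < q) :
    eLpNorm' f q (μ.prod (ν.withDensity A)) ≤ M ^ (1 / q) * eLpNorm' f q (μ.prod ν) := by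
  have hν : ν.withDensity A ≤ M • ν := by
    rw [← withDensity_const]
    exact withDensity_mono (.of_forall hAM)
  calc eLpNorm' f q (μ.prod (ν.withDensity A)) ≤ eLpNorm' f q (μ.prod (M • ν)) :=
        eLpNorm'_mono_measure f (Measure.prod_mono le_rfl hν) hq.le
    _ = M ^ (1 / q) * eLpNorm' f q (μ.prod ν) := by
        rw [Measure.prod_smul_right, eLpNorm'_smul_measure hq.le]

theorem Complex.enorm_ofReal (x : ℝ) : ‖(x : ℂ)‖ₑ = ‖x‖ₑ := by
  simp only [enorm_eq_nnnorm, Complex.nnnorm_real]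

section PotentialXi

variable {E : Type*} [NormedAddCommGroup E] [NormedSpace ℝ E]

def symmPotential (W : E → ℝ) (p : E × E) : ℝ :=
  W (p.1 + (2:ℝ)⁻¹ • p.2) + W (p.1 - (2:ℝ)⁻¹ • p.2)

theorem symmPotential_eq_add (W : E → ℝ) :
    symmPotential W =
      (fun p : E × E => W (p.1 + (2:ℝ)⁻¹ • p.2)) + fun p => W (p.1 + (-(2:ℝ)⁻¹) • p.2) := by
  ext p
  simp [symmPotential, neg_smul, sub_eq_add_neg]

variable [MeasurableSpace E] {μ : Measure E} {a W : E → ℝ} {ξ : E × E → ℂ}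

-- The paper's `G` is `h⁻¹ • potentialXi volume (fun r => α₀ (h⁻¹ • r)) W ξ`.
def potentialXi (μ : Measure E) (a W : E → ℝ) (ξ : E × E → ℂ) (X : E) : ℂ :=
  ∫ r, ((a r : ℝ) : ℂ) * ((W (X + (2:ℝ)⁻¹ • r) + W (X - (2:ℝ)⁻¹ • r) : ℝ) : ℂ) * ξ (X, r) ∂μ

theorem enorm_potentialXi_le (ha : AEMeasurable a μ) (X : E) :
    ‖potentialXi μ a W ξ X‖ₑ ≤
      eLpNorm' (fun r => (symmPotential W • ξ) (X, r)) 1 (μ.withDensity (‖a ·‖ₑ)) := by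
  rw [eLpNorm', lintegral_withDensity_eq_lintegral_mul_non_measurable₀ _ ha.enorm
    (.of_forall fun _ => enorm_lt_top)]
  refine (enorm_integral_le_lintegral_enorm _).trans (le_of_eq ?_)
  simp [symmPotential, enorm_mul, mul_assoc, Complex.enorm_ofReal]

variable [SFinite μ]

theorem eLpNorm'_potentialXi_le_eLpNorm'_prod (ha : AEMeasurable a μ)
    (hF : AEStronglyMeasurable (symmPotential W • ξ) (μ.prod (μ.withDensity (‖a ·‖ₑ)))) :
    eLpNorm' (potentialXi μ a W ξ) (6/5) μ ≤ μ.withDensity (‖a ·‖ₑ) Set.univ ^ (1/6 : ℝ) *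
      eLpNorm' (symmPotential W • ξ) (6/5) (μ.prod (μ.withDensity (‖a ·‖ₑ))) := by
  set ν := μ.withDensity (‖a ·‖ₑ)
  set F := symmPotential W • ξ
  have hF' : AEMeasurable (fun p => ‖F p‖ₑ ^ (6/5 : ℝ)) (μ.prod ν) := hF.enorm.pow_const _
  have hpt : ∀ᵐ X ∂μ, ‖potentialXi μ a W ξ X‖ₑ ^ (6/5 : ℝ) ≤
      (∫⁻ r, ‖F (X, r)‖ₑ ^ (6/5 : ℝ) ∂ν) * ν Set.univ ^ (1/5 : ℝ) := by
    filter_upwards [hF.prodMk_left] with X hX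
    have hHolder := (enorm_potentialXi_le ha X).trans
      (eLpNorm'_le_eLpNorm'_mul_rpow_measure_univ one_pos (by norm_num : (1:ℝ) ≤ 6/5) hX)
    calc ‖potentialXi μ a W ξ X‖ₑ ^ (6/5 : ℝ)
        ≤ (eLpNorm' (fun r => F (X, r)) (6/5) ν * ν Set.univ ^ (1 / 1 - 1 / (6/5) : ℝ))
          ^ (6/5 : ℝ) := by gcongr
      _ = (∫⁻ r, ‖F (X, r)‖ₑ ^ (6/5 : ℝ) ∂ν) * ν Set.univ ^ (1/5 : ℝ) := by
        rw [eLpNorm', ENNReal.mul_rpow_of_nonneg _ _ (by norm_num), ← ENNReal.rpow_mul,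
          ← ENNReal.rpow_mul]
        norm_num
  calc eLpNorm' (potentialXi μ a W ξ) (6/5) μ
      ≤ (∫⁻ X, (∫⁻ r, ‖F (X, r)‖ₑ ^ (6/5 : ℝ) ∂ν) * ν Set.univ ^ (1/5 : ℝ) ∂μ)
          ^ (1 / (6/5) : ℝ) := by
        rw [eLpNorm']
        gcongr ?_ ^ _
        exact lintegral_mono_ae hpt
    _ = ((∫⁻ p, ‖F p‖ₑ ^ (6/5 : ℝ) ∂(μ.prod ν)) * ν Set.univ ^ (1/5 : ℝ)) ^ (1 / (6/5) : ℝ) := by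
        rw [lintegral_mul_const'' _ hF'.lintegral_prod_right', lintegral_prod _ hF']
    _ = ν Set.univ ^ (1/6 : ℝ) * eLpNorm' F (6/5) (μ.prod ν) := by
        rw [eLpNorm', ENNReal.mul_rpow_of_nonneg _ _ (by norm_num), ← ENNReal.rpow_mul, mul_comm]
        norm_num

variable [BorelSpace E] [SecondCountableTopology E] [μ.IsAddRightInvariant]

theorem aestronglyMeasurable_comp_fst_add_smul (hW : AEStronglyMeasurable W μ) (ν : Measure E)
    [SFinite ν] (c : ℝ) : AEStronglyMeasurable (fun p : E × E => W (p.1 + c • p.2)) (μ.prod ν) :=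
  hW.comp_quasiMeasurePreserving (quasiMeasurePreserving_fst_add μ ν (measurable_const_smul c))

theorem aestronglyMeasurable_symmPotential (hW : AEStronglyMeasurable W μ) (ν : Measure E)
    [SFinite ν] : AEStronglyMeasurable (symmPotential W) (μ.prod ν) := by
  rw [symmPotential_eq_add]
  exact (aestronglyMeasurable_comp_fst_add_smul hW ν _).add
    (aestronglyMeasurable_comp_fst_add_smul hW ν _)

theorem eLpNorm'_symmPotential_le (hW : AEStronglyMeasurable W μ) (ν : Measure E) [SFinite ν]
    {q : ℝ} (hq : 1 ≤ q) :
    eLpNorm' (symmPotential W) q (μ.prod ν) ≤ 2 * ν Set.univ ^ (1 / q) * eLpNorm' W q μ := by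
  have hshift (c : ℝ) := eLpNorm'_comp_fst_add μ ν (measurable_const_smul c) hW
    (zero_lt_one.trans_le hq)
  rw [symmPotential_eq_add]
  calc _ ≤ _ := eLpNorm'_add_le (aestronglyMeasurable_comp_fst_add_smul hW ν _)
        (aestronglyMeasurable_comp_fst_add_smul hW ν _) hq
    _ = 2 * ν Set.univ ^ (1 / q) * eLpNorm' W q μ := by rw [hshift, hshift, two_mul, add_mul]

theorem eLpNorm'_potentialXi_le (ha : AEMeasurable a μ) {M : ℝ≥0∞} (haM : ∀ r, ‖a r‖ₑ ≤ M)
    (hW : AEStronglyMeasurable W μ) (hξ : AEStronglyMeasurable ξ (μ.prod μ)) :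
    eLpNorm' (potentialXi μ a W ξ) (6/5) μ ≤
      2 * (M * ∫⁻ r, ‖a r‖ₑ ∂μ) ^ (1/2 : ℝ) * eLpNorm' W 3 μ * eLpNorm' ξ 2 (μ.prod μ) := by
  set ν := μ.withDensity (‖a ·‖ₑ)
  set S := ∫⁻ r, ‖a r‖ₑ ∂μ
  have hνS : ν Set.univ = S := by rw [withDensity_apply _ MeasurableSet.univ, Measure.restrict_univ]
  have hξν : AEStronglyMeasurable ξ (μ.prod ν) :=
    hξ.mono_ac (.prod .rfl (withDensity_absolutelyContinuous _ _))
  have hWν := aestronglyMeasurable_symmPotential hW ν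
  calc eLpNorm' (potentialXi μ a W ξ) (6/5) μ
      ≤ S ^ (1/6 : ℝ) * eLpNorm' (symmPotential W • ξ) (6/5) (μ.prod ν) := by
        rw [← hνS]
        exact eLpNorm'_potentialXi_le_eLpNorm'_prod ha (hWν.smul hξν)
    _ ≤ S ^ (1/6 : ℝ) * (eLpNorm' (symmPotential W) 3 (μ.prod ν) * eLpNorm' ξ 2 (μ.prod ν)) := by
        gcongr
        exact eLpNorm'_smul_le_mul_eLpNorm' hξν hWν (by norm_num) (by norm_num) (by norm_num)
    _ ≤ S ^ (1/6 : ℝ) * ((2 * S ^ (1/3 : ℝ) * eLpNorm' W 3 μ) *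
          (M ^ (1/2 : ℝ) * eLpNorm' ξ 2 (μ.prod μ))) := by
        gcongr
        · simpa [hνS] using eLpNorm'_symmPotential_le hW ν (q := 3) (by norm_num)
        · simpa using eLpNorm'_prod_withDensity_le μ μ haM ξ (q := 2) (by norm_num)
    _ = 2 * (M * S) ^ (1/2 : ℝ) * eLpNorm' W 3 μ * eLpNorm' ξ 2 (μ.prod μ) := by
        have hS : S ^ (1/2 : ℝ) = S ^ (1/6 : ℝ) * S ^ (1/3 : ℝ) := by
          rw [← ENNReal.rpow_add_of_nonneg _ _ (by norm_num) (by norm_num)]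
          norm_num
        rw [ENNReal.mul_rpow_of_nonneg _ _ (by norm_num), hS]
        ring

end PotentialXi

theorem eLpNorm'_inv_mul_potentialXi_le {α₀ W : E3 → ℝ} {ξ : E3 × E3 → ℂ} (hα₀ : AEMeasurable α₀)
    {M : ℝ≥0∞} (hM : ∀ r, ‖α₀ r‖ₑ ≤ M) (hW : AEStronglyMeasurable W)
    (hξ : AEStronglyMeasurable ξ) {h : ℝ} (hh : 0 < h) :
    eLpNorm' (fun X => (h : ℂ)⁻¹ * potentialXi volume (fun r => α₀ (h⁻¹ • r)) W ξ X) (6/5) volume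
      ≤ ENNReal.ofReal h ^ (1/2 : ℝ) * (2 * (M * ∫⁻ r, ‖α₀ r‖ₑ) ^ (1/2 : ℝ))
        * eLpNorm W 3 volume * eLpNorm ξ 2 volume := by
  have ha : AEMeasurable (fun r : E3 => α₀ (h⁻¹ • r)) :=
    hα₀.comp_quasiMeasurePreserving
      (Measure.quasiMeasurePreserving_smul volume (inv_ne_zero hh.ne'))
  have hscale : ∫⁻ r : E3, ‖α₀ (h⁻¹ • r)‖ₑ = ENNReal.ofReal h ^ 3 * ∫⁻ r, ‖α₀ r‖ₑ := by
    rw [lintegral_comp_inv_smul_of_pos volume (‖α₀ ·‖ₑ) hh, finrank_euclideanSpace_fin,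
      ENNReal.ofReal_pow hh.le]
  have hcoef :
      ‖(h : ℂ)⁻¹‖ₑ * (ENNReal.ofReal h ^ 3) ^ (1/2 : ℝ) = ENNReal.ofReal h ^ (1/2 : ℝ) := by
    have hx0 : ENNReal.ofReal h ≠ 0 := ENNReal.ofReal_pos.mpr hh |>.ne'
    rw [← Complex.ofReal_inv, Complex.enorm_ofReal, Real.enorm_of_nonneg (by positivity),
      ENNReal.ofReal_inv_of_pos hh, ← ENNReal.rpow_neg_one, ← ENNReal.rpow_natCast,
      ← ENNReal.rpow_mul, ← ENNReal.rpow_add _ _ hx0 ENNReal.ofReal_ne_top]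
    norm_num
  calc eLpNorm' (fun X => (h : ℂ)⁻¹ * potentialXi volume (fun r => α₀ (h⁻¹ • r)) W ξ X) (6/5) volume
      = ‖(h : ℂ)⁻¹‖ₑ * eLpNorm' (potentialXi volume (fun r => α₀ (h⁻¹ • r)) W ξ) (6/5) volume := by
        simp_rw [← smul_eq_mul]
        exact eLpNorm'_const_smul ((h : ℂ)⁻¹) (by norm_num : (0:ℝ) < 6/5)
    _ ≤ ‖(h : ℂ)⁻¹‖ₑ * (2 * (M * (ENNReal.ofReal h ^ 3 * ∫⁻ r, ‖α₀ r‖ₑ)) ^ (1/2 : ℝ)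
          * eLpNorm W 3 volume * eLpNorm ξ 2 volume) := by
        rw [← hscale, eLpNorm_eq_eLpNorm' (by norm_num) (by norm_num),
          eLpNorm_eq_eLpNorm' (by norm_num) (by norm_num)]
        gcongr
        exact eLpNorm'_potentialXi_le ha (fun r => hM _) hW hξ
    _ = _ := by
        rw [mul_left_comm M, ENNReal.mul_rpow_of_nonneg _ _ (by norm_num), ← hcoef]
        ring

/-- for `W ∈ L³(ℝ³)`, `α₀ ∈ L¹∩L^∞` nonnegative and `ξ̃ ∈ L²(ℝ³×ℝ³)`, the
function `G(X) = h⁻¹ ∫ α₀(r/h)(W(X+r/2)+W(X−r/2)) ξ̃(X,r) dr` satisfies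
`‖G‖_{6/5} ≤ C h^{1/2} ‖W‖₃ ‖ξ̃‖₂`, with `C` depending only on `‖α₀‖₁` and `‖α₀‖_∞`. -/
theorem potential_xi_error_bound
    (α₀ : E3 → ℝ) (hα₀pos : ∀ r, 0 ≤ α₀ r)
    (hα₀L1 : Integrable α₀) (hα₀bdd : ∃ M, ∀ r, α₀ r ≤ M) :
    ∃ C : ℝ, 0 < C ∧
      ∀ (h : ℝ), 0 < h → h ≤ 1 →
      ∀ (W : E3 → ℝ), MemLp W 3 (volume : Measure E3) →
      ∀ (ξ : E3 × E3 → ℂ), MemLp ξ 2 (volume : Measure (E3 × E3)) →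
      LpNorm (6/5)
          (fun X => (h : ℂ)⁻¹ * ∫ r : E3,
            ((α₀ (h⁻¹ • r) : ℝ) : ℂ)
              * ((W (X + (2:ℝ)⁻¹ • r) + W (X - (2:ℝ)⁻¹ • r) : ℝ) : ℂ) * ξ (X, r))
        ≤ C * h ^ ((1:ℝ)/2) * LpNorm 3 (fun X => ((W X : ℝ) : ℂ))
            * Real.sqrt (∫ p : E3 × E3, ‖ξ p‖ ^ 2) := by
  obtain ⟨M, hM⟩ := hα₀bdd
  have hα₀M (r : E3) : ‖α₀ r‖ₑ ≤ ENNReal.ofReal M := by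
    rw [Real.enorm_of_nonneg (hα₀pos r)]
    exact ENNReal.ofReal_le_ofReal (hM r)
  set B : ℝ≥0∞ := 2 * (ENNReal.ofReal M * ∫⁻ r, ‖α₀ r‖ₑ) ^ (1/2 : ℝ)
  have hB : B ≠ ∞ := by
    have := hα₀L1.2.ne
    finiteness
  refine ⟨B.toReal + 1, by positivity, fun h hh _ W hW ξ hξ => ?_⟩
  have hWnorm : eLpNorm W 3 volume = ENNReal.ofReal (LpNorm 3 (fun X => ((W X : ℝ) : ℂ))) := by
    rw [hW.eLpNorm_eq_integral_rpow_norm (by norm_num) (by norm_num)]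
    simp [LpNorm, Complex.norm_real]
  have hξnorm : eLpNorm ξ 2 volume = ENNReal.ofReal (Real.sqrt (∫ p : E3 × E3, ‖ξ p‖ ^ 2)) := by
    rw [hξ.eLpNorm_eq_integral_rpow_norm (by norm_num) (by norm_num), Real.sqrt_eq_rpow]
    norm_num
  calc _ ≤ (eLpNorm' (fun X => (h : ℂ)⁻¹ * potentialXi volume (fun r => α₀ (h⁻¹ • r)) W ξ X)
          (6/5) volume).toReal := integral_norm_rpow_le_toReal_eLpNorm' _ (by norm_num)
    _ ≤ (ENNReal.ofReal h ^ (1/2 : ℝ) * B * eLpNorm W 3 volume * eLpNorm ξ 2 volume).toReal :=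
        ENNReal.toReal_mono (by rw [hWnorm, hξnorm]; finiteness)
          (eLpNorm'_inv_mul_potentialXi_le hα₀L1.aemeasurable hα₀M hW.1 hξ.1 hh)
    _ = B.toReal * h ^ ((1:ℝ)/2) * LpNorm 3 (fun X => ((W X : ℝ) : ℂ))
          * Real.sqrt (∫ p : E3 × E3, ‖ξ p‖ ^ 2) := by
        rw [hWnorm, hξnorm, ENNReal.toReal_mul, ENNReal.toReal_mul, ENNReal.toReal_mul,
          ← ENNReal.toReal_rpow, ENNReal.toReal_ofReal hh.le,
          ENNReal.toReal_ofReal (LpNorm_nonneg _ _), ENNReal.toReal_ofReal (Real.sqrt_nonneg _),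
          mul_comm (h ^ _)]
    _ ≤ _ := by
        have := LpNorm_nonneg 3 (fun X => ((W X : ℝ) : ℂ))
        gcongr
        linarith
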